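/- The quotient map q : Conf(n, ℂ) → UConf(n, ℂ) is a covering map; in particular the action of Equiv.Perm (Fin n) on Conf(n, ℂ) is free. -/

import Mathlib

/-- The ordered configuration space of `n` distinct points in `X`:
injective tuples `Fin n → X`, topologized as a subspace of `Fin n → X`. -/
def Conf (n : ℕ) (X : Type*) [TopologicalSpace X] : Type _ :=
  {f : Fin n → X // Function.Injective f}

instance (n : ℕ) (X : Type*) [TopologicalSpace X] : TopologicalSpace (Conf n X) :=
  instTopologicalSpaceSubtype

/-- The symmetric group acts on ordered configurations by `σ • f = f ∘ σ⁻¹`. -/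
instance (n : ℕ) (X : Type*) [TopologicalSpace X] : SMul (Equiv.Perm (Fin n)) (Conf n X) :=
  ⟨fun σ f => ⟨f.1 ∘ ⇑σ⁻¹, f.2.comp (Equiv.injective _)⟩⟩

instance (n : ℕ) (X : Type*) [TopologicalSpace X] : MulAction (Equiv.Perm (Fin n)) (Conf n X) where
  one_smul f := Subtype.ext <| by funext i; rfl
  mul_smul σ τ f := Subtype.ext <| by
    funext i
    show f.1 ((σ * τ)⁻¹ i) = f.1 (τ⁻¹ (σ⁻¹ i))
    simp [mul_inv_rev, Equiv.Perm.mul_apply]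

/-- The unordered configuration space: the quotient of `Conf n X` by the action of the
symmetric group, with the quotient topology. -/
def UConf (n : ℕ) (X : Type*) [TopologicalSpace X] : Type _ :=
  Quotient (MulAction.orbitRel (Equiv.Perm (Fin n)) (Conf n X))

instance (n : ℕ) (X : Type*) [TopologicalSpace X] : TopologicalSpace (UConf n X) :=
  instTopologicalSpaceQuotient

/-- The quotient map from ordered to unordered configurations. -/
def confQuot (n : ℕ) (X : Type*) [TopologicalSpace X] : Conf n X → UConf n X :=
  Quotient.mk _

namespace ConfAux

variable {n : ℕ} {X : Type*} [TopologicalSpace X]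

instance : ContinuousConstSMul (Equiv.Perm (Fin n)) (Conf n X) :=
  ⟨fun σ => by
    have h : Continuous fun f : Conf n X => (fun i => f.1 (σ⁻¹ i) : Fin n → X) :=
      continuous_pi fun i => (continuous_apply (σ⁻¹ i)).comp continuous_subtype_val
    exact h.subtype_mk _⟩

instance [T2Space X] : T2Space (Conf n X) :=
  inferInstanceAs (T2Space {f : Fin n → X // Function.Injective f})

theorem free (σ : Equiv.Perm (Fin n)) (f : Conf n X) (h : σ • f = f) : σ = 1 := by
  have h1 : f.1 ∘ ⇑σ⁻¹ = f.1 := congrArg Subtype.val h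
  refine Equiv.ext fun i => ?_
  have h2 : f.1 i = f.1 (σ i) := by simpa using congrFun h1 (σ i)
  exact (f.2 h2).symm

theorem quot_smul (σ : Equiv.Perm (Fin n)) (f : Conf n X) :
    confQuot n X (σ • f) = confQuot n X f :=
  Quotient.sound ⟨σ, rfl⟩

theorem hq_cont : Continuous (confQuot n X) := continuous_quot_mk

theorem hq_open : IsOpenMap (confQuot n X) := isOpenMap_quotient_mk'_mul

theorem exact {u v : Conf n X} (h : confQuot n X u = confQuot n X v) :
    ∃ σ : Equiv.Perm (Fin n), σ • v = u := by
  have h2 := Quotient.exact h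
  exact MulAction.mem_orbit_iff.mp h2

end ConfAux

open Pointwise in
/-- The quotient map `q : Conf(n, ℂ) → UConf(n, ℂ)` is a covering map; in particular the
action of the symmetric group on `Conf(n, ℂ)` is free. -/
theorem confQuot_isCoveringMap_and_action_free (n : ℕ) :
    IsCoveringMap (confQuot n ℂ) ∧
    ∀ (σ : Equiv.Perm (Fin n)) (f : Conf n ℂ), σ • f = f → σ = 1 := by
  classical
  refine ⟨?_, fun σ f h => ConfAux.free σ f h⟩
  set G := Equiv.Perm (Fin n) with hG
  set E := Conf n ℂ with hE
  set q := confQuot n ℂ with hqdef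
  haveI : T2Space E := inferInstanceAs (T2Space (Conf n ℂ))
  have hq_cont : Continuous q := ConfAux.hq_cont
  have hq_open : IsOpenMap q := ConfAux.hq_open
  intro x
  obtain ⟨f₀, hf₀⟩ : ∃ f₀ : E, q f₀ = x := Quot.exists_rep x
  -- separating open sets
  have key : ∀ σ : G, ∃ C : Set E, IsOpen C ∧ f₀ ∈ C ∧ (σ ≠ 1 → Disjoint (σ • C) C) := by
    intro σ
    by_cases hσ : σ = 1
    · exact ⟨Set.univ, isOpen_univ, trivial, fun h => absurd hσ h⟩
    · have hne : σ • f₀ ≠ f₀ := fun h => hσ (ConfAux.free σ f₀ h)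
      obtain ⟨W, V, hW, hV, hWf, hVf, hd⟩ := t2_separation hne
      refine ⟨V ∩ σ⁻¹ • W, hV.inter (hW.smul σ⁻¹), ⟨hVf, Set.mem_inv_smul_set_iff.mpr hWf⟩,
        fun _ => hd.mono ?_ Set.inter_subset_left⟩
      rintro e ⟨c, hc, rfl⟩
      exact Set.mem_inv_smul_set_iff.mp hc.2
  choose C hCo hCf hCd using key
  set U : Set E := ⋂ σ : G, C σ with hUdef
  have hUo : IsOpen U := isOpen_iInter_of_finite hCo
  have hU0 : f₀ ∈ U := Set.mem_iInter.mpr hCf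
  have hdisj : ∀ σ : G, σ ≠ 1 → Disjoint (σ • U) U := fun σ h =>
    (hCd σ h).mono (Set.smul_set_mono (Set.iInter_subset _ σ)) (Set.iInter_subset _ σ)
  -- uniqueness of the translate containing a point
  have uniqA : ∀ (σ τ : G) (e : E), σ⁻¹ • e ∈ U → τ⁻¹ • e ∈ U → σ = τ := by
    intro σ τ e hσ hτ
    by_contra hne
    have h1 : (τ⁻¹ * σ) ≠ 1 := fun h => hne (inv_mul_eq_one.mp h).symm
    have h2 : τ⁻¹ • e ∈ (τ⁻¹ * σ) • U := by
      refine ⟨σ⁻¹ • e, hσ, ?_⟩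
      show (τ⁻¹ * σ) • σ⁻¹ • e = τ⁻¹ • e
      rw [smul_smul, mul_assoc, mul_inv_cancel, mul_one]
    exact Set.disjoint_left.mp (hdisj _ h1) h2 hτ
  have uniqB : ∀ u ∈ U, ∀ v ∈ U, q u = q v → u = v := by
    intro u hu v hv h
    obtain ⟨σ, hσ⟩ := ConfAux.exact h
    by_cases h1 : σ = 1
    · rw [h1, one_smul] at hσ; exact hσ.symm
    · exfalso
      exact Set.disjoint_left.mp (hdisj σ h1) ⟨v, hv, hσ⟩ hu
  -- section and sheet-labelling functions
  set sec : UConf n ℂ → E := fun y => if h : ∃ u, u ∈ U ∧ q u = y then h.choose else f₀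
    with hsecdef
  set σof : E → G := fun e => if h : ∃ σ : G, σ⁻¹ • e ∈ U then h.choose else 1 with hσofdef
  have hsec : ∀ y ∈ q '' U, sec y ∈ U ∧ q (sec y) = y := by
    intro y hy
    obtain ⟨u, hu, hqu⟩ := hy
    have hex : ∃ u, u ∈ U ∧ q u = y := ⟨u, hu, hqu⟩
    simp only [hsecdef, dif_pos hex]
    exact hex.choose_spec
  have hσof_eq : ∀ (σ : G) (e : E), σ⁻¹ • e ∈ U → σof e = σ := by
    intro σ e he
    have hex : ∃ σ : G, σ⁻¹ • e ∈ U := ⟨σ, he⟩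
    simp only [hσofdef, dif_pos hex]
    exact uniqA _ _ _ hex.choose_spec he
  -- the source
  set S : Set E := q ⁻¹' (q '' U) with hSdef
  have hSmem : ∀ e : E, e ∈ S ↔ ∃ σ : G, σ⁻¹ • e ∈ U := by
    intro e
    constructor
    · rintro ⟨u, hu, hqu⟩
      obtain ⟨σ, hσ⟩ := ConfAux.exact hqu.symm
      exact ⟨σ, by rwa [← hσ, inv_smul_smul]⟩
    · rintro ⟨σ, hσ⟩
      exact ⟨σ⁻¹ • e, hσ, ConfAux.quot_smul _ _⟩
  have hSopen : IsOpen S := hq_cont.isOpen_preimage _ (hq_open U hUo)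
  have hσofS : ∀ e ∈ S, (σof e)⁻¹ • e ∈ U := by
    intro e he
    obtain ⟨σ, hσ⟩ := (hSmem e).mp he
    rw [hσof_eq σ e hσ]; exact hσ
  -- discrete fiber type
  letI : TopologicalSpace G := ⊥
  haveI : DiscreteTopology G := ⟨rfl⟩
  -- partial equivalence
  set pe : PartialEquiv E (UConf n ℂ × G) :=
    { toFun := fun e => (q e, σof e)
      invFun := fun p => p.2 • sec p.1
      source := S
      target := (q '' U) ×ˢ (Set.univ : Set G)
      map_source' := fun e he => ⟨he, trivial⟩
      map_target' := by
        rintro ⟨y, σ⟩ ⟨hy, -⟩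
        show σ • sec y ∈ S
        have := (hsec y hy).2
        simp only [Set.mem_preimage, hSdef]
        rw [show q (σ • sec y) = y from (ConfAux.quot_smul σ (sec y)).trans this]
        exact hy
      left_inv' := by
        intro e he
        show (σof e) • sec (q e) = e
        have h1 : (σof e)⁻¹ • e ∈ U := hσofS e he
        have h2 := hsec (q e) he
        have h3 : q (sec (q e)) = q ((σof e)⁻¹ • e) :=
          h2.2.trans (ConfAux.quot_smul _ _).symm
        have h4 : sec (q e) = (σof e)⁻¹ • e := uniqB _ h2.1 _ h1 h3
        rw [h4, smul_inv_smul]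
      right_inv' := by
        rintro ⟨y, σ⟩ ⟨hy, -⟩
        have h1 := hsec y hy
        have h2 : q (σ • sec y) = y := (ConfAux.quot_smul σ (sec y)).trans h1.2
        have h3 : σof (σ • sec y) = σ := hσof_eq σ _ (by rw [inv_smul_smul]; exact h1.1)
        show (q (σ • sec y), σof (σ • sec y)) = (y, σ)
        rw [h2, h3] }
    with hpedef
  -- continuity on the source
  have hc : ContinuousOn pe pe.source := by
    apply continuousOn_of_forall_continuousAt
    intro e he
    have h1 : (σof e)⁻¹ • e ∈ U := hσofS e he
    have hmem : (σof e) • U ∈ nhds e := by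
      refine (hUo.smul (σof e)).mem_nhds ?_
      exact Set.mem_smul_set_iff_inv_smul_mem.mpr h1
    have heq : pe =ᶠ[nhds e] fun e' => (q e', σof e) := by
      refine Filter.eventuallyEq_of_mem hmem fun e' he' => ?_
      show (q e', σof e') = (q e', σof e)
      rw [hσof_eq (σof e) e' (Set.mem_smul_set_iff_inv_smul_mem.mp he')]
    exact (ContinuousAt.prodMk (hq_cont.continuousAt) continuousAt_const).congr heq.symm
  -- the restriction to the source is an open map
  have ho : IsOpenMap (pe.source.restrict pe) := by
    intro V hV
    obtain ⟨W, hWo, hWV⟩ := isOpen_induced_iff.mp hV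
    have himg : pe.source.restrict pe '' V =
        ⋃ σ : G, (q '' (W ∩ σ • U)) ×ˢ ({σ} : Set G) := by
      ext p
      constructor
      · rintro ⟨⟨e, he⟩, hev, rfl⟩
        have heW : e ∈ W := by rw [← hWV] at hev; exact hev
        refine Set.mem_iUnion.mpr ⟨σof e, ?_⟩
        exact ⟨⟨e, ⟨heW, Set.mem_smul_set_iff_inv_smul_mem.mpr (hσofS e he)⟩, rfl⟩, rfl⟩
      · intro hp
        obtain ⟨σ, ⟨⟨e, ⟨heW, heU⟩, h1⟩, h2⟩⟩ := Set.mem_iUnion.mp hp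
        have heS : e ∈ S := (hSmem e).mpr ⟨σ, Set.mem_smul_set_iff_inv_smul_mem.mp heU⟩
        refine ⟨⟨e, heS⟩, ?_, ?_⟩
        · rw [← hWV]; exact heW
        · show (q e, σof e) = p
          have : σof e = σ := hσof_eq σ e (Set.mem_smul_set_iff_inv_smul_mem.mp heU)
          obtain ⟨p1, p2⟩ := p
          simp only [Set.mem_singleton_iff] at h2
          simp [this, h1, h2]
    rw [himg]
    exact isOpen_iUnion fun σ =>
      (hq_open _ (hWo.inter (hUo.smul σ))).prod (isOpen_discrete _)
  -- assemble the trivialization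
  set ph : OpenPartialHomeomorph E (UConf n ℂ × G) :=
    OpenPartialHomeomorph.ofContinuousOpenRestrict pe hc ho hSopen with hphdef
  let triv : Bundle.Trivialization G q :=
    { toOpenPartialHomeomorph := ph
      baseSet := q '' U
      open_baseSet := hq_open U hUo
      source_eq := rfl
      target_eq := rfl
      proj_toFun := fun e _ => rfl }
  have hxb : x ∈ q '' U := hf₀ ▸ ⟨f₀, hU0, rfl⟩
  exact IsEvenlyCovered.to_isEvenlyCovered_preimage (IsEvenlyCovered.of_trivialization (t := triv) hxb)
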